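/- arXiv:2407.20620 — 3 statements merged into one kernel-verified Lean document; each statement's English description precedes it below -/
import Mathlib

section
/- Let f(x) = (1/2)⟨x, Qx⟩ + ⟨q, x⟩ with Q symmetric positive semidefinite with smallest eigenvalue m ≥ 0 and largest eigenvalue L > 0, let g : ℝⁿ → ℝ be convex and lower semicontinuous, and let μ ∈ (0, 1/L). Set H = I − μQ and m̃ = min{(1 − μm)m, (1 − μL)L}. Then for every x, x' ∈ ℝⁿ: F_μ(x) − F_μ(x') ≤ ⟨G_μ(x), H(x − x')⟩ − (m̃/2)⟨x − x', H(x − x')⟩. -/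
/-!
With `z = prox_{μg}(x - μ∇f x)` and `P = μ⁻¹ - Q = H / μ`, the envelope of a quadratic `f` is
`F_μ x = φ z + ½⟪x - z, P (x - z)⟫`, where `φ = f + g`. The optimality of `z` gives the
subgradient inequality for `g` at `z`, and `f` equals its second-order Taylor expansion, so
`φ z - φ z'` is bounded by a quadratic in `z - z'`. Completing the square in
`(x - z) - (x' - z')` leaves the term `-½⟪w, Q H w⟫` with `w = x - x'`, and
`⟪w, Q H w⟫ ≥ m̃ ⟪w, H w⟫` because `Q - m̃` and `H` are commuting positive operators; this
last fact reduces to `(Q - m̃)² ≤ (μ⁻¹ - m̃)(Q - m̃)`, i.e. to `0 ≤ S ≤ c ⟹ S² ≤ c S`.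
-/

open Set RealInnerProductSpace Filter Topology

noncomputable section

theorem nonneg_of_forall_mul_add_sq_mul_nonneg {c K : ℝ}
    (h : ∀ t ∈ Ioc (0 : ℝ) 1, 0 ≤ t * c + t ^ 2 * K) : 0 ≤ c := by
  have hlim : Tendsto (fun t : ℝ => c + t * K) (𝓝[>] 0) (𝓝 c) :=
    (Continuous.tendsto' (f := fun t : ℝ => c + t * K) (by fun_prop) 0 c (by simp)).mono_left
      nhdsWithin_le_nhds
  refine ge_of_tendsto hlim ?_
  filter_upwards [Ioc_mem_nhdsGT one_pos] with t ht
  exact nonneg_of_mul_nonneg_right (by linarith [h t ht]) ht.1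

theorem IsMinOn.iInf_univ_eq {α β : Type*} [ConditionallyCompleteLinearOrder β] {f : α → β}
    {a : α} (h : IsMinOn f univ a) : ⨅ x, f x = f a :=
  have : Nonempty α := ⟨a⟩
  ciInf_eq_of_forall_ge_of_forall_gt_exists_lt (fun x => isMinOn_iff.1 h x (mem_univ x))
    fun _ hw => ⟨a, hw⟩

variable {E : Type*} [NormedAddCommGroup E] [InnerProductSpace ℝ E]

theorem ConvexOn.inner_sub_div_le_of_isMinOn {g : E → ℝ} (hg : ConvexOn ℝ univ g) {μ : ℝ}
    (hμ : 0 < μ) {v z : E} (hz : IsMinOn (fun y => g y + ‖y - v‖ ^ 2 / (2 * μ)) univ z)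
    (u : E) : ⟪v - z, u - z⟫ / μ ≤ g u - g z := by
  suffices 0 ≤ g u - g z - ⟪v - z, u - z⟫ / μ by linarith
  refine nonneg_of_forall_mul_add_sq_mul_nonneg (K := ‖u - z‖ ^ 2 / (2 * μ)) fun t ht => ?_
  have hmin := isMinOn_iff.1 hz (z + t • (u - z)) (mem_univ _)
  have hconv := hg.2 (mem_univ z) (mem_univ u) (sub_nonneg.2 ht.2) ht.1.le (by ring)
  rw [smul_eq_mul, smul_eq_mul, show (1 - t) • z + t • u = z + t • (u - z) by module] at hconv
  have hnorm : ‖z + t • (u - z) - v‖ ^ 2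
      = ‖z - v‖ ^ 2 - 2 * t * ⟪v - z, u - z⟫ + t ^ 2 * ‖u - z‖ ^ 2 := by
    rw [show z + t • (u - z) - v = (z - v) + t • (u - z) by abel, norm_add_sq_real,
      real_inner_smul_right, norm_smul, Real.norm_eq_abs, mul_pow, sq_abs,
      ← neg_sub v z, inner_neg_left]
    ring
  simp only [hnorm] at hmin
  field_simp at hmin ⊢
  linarith [mul_le_mul_of_nonneg_left hconv hμ.le]

theorem norm_map_sq_le_mul_inner_map_self {T : E →L[ℝ] E} (hT : ∀ x y, ⟪T x, y⟫ = ⟪x, T y⟫)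
    {c : ℝ} (hc : 0 < c) (hT₀ : ∀ x, 0 ≤ ⟪x, T x⟫) (hTc : ∀ x, ⟪x, T x⟫ ≤ c * ‖x‖ ^ 2)
    (w : E) : ‖T w‖ ^ 2 ≤ c * ⟪w, T w⟫ := by
  have hy := hT₀ (c • w - T w)
  have hTw := hTc (T w)
  have hTT : ⟪w, T (T w)⟫ = ‖T w‖ ^ 2 := by rw [← hT, real_inner_self_eq_norm_sq]
  simp only [map_sub, map_smul, inner_sub_left, inner_sub_right, real_inner_smul_left,
    real_inner_smul_right, hTT, real_inner_self_eq_norm_sq] at hy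
  refine le_of_mul_le_mul_left ?_ hc
  linarith

def quadratic (Q : E →L[ℝ] E) (q x : E) : ℝ := 1 / 2 * ⟪x, Q x⟫ + ⟪q, x⟫

section Symmetric

variable {Q : E →L[ℝ] E} (hQ : ∀ x y, ⟪Q x, y⟫ = ⟪x, Q y⟫)
include hQ

theorem inner_map_comm (x y : E) : ⟪x, Q y⟫ = ⟪y, Q x⟫ := by
  rw [← hQ, real_inner_comm]

theorem quadratic_add (q x e : E) :
    quadratic Q q (x + e) = quadratic Q q x + ⟪Q x + q, e⟫ + ⟪e, Q e⟫ / 2 := by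
  simp only [quadratic, map_add, inner_add_left, inner_add_right, inner_map_comm hQ e x, hQ x e]
  ring

theorem hasGradientAt_quadratic [CompleteSpace E] (q x : E) :
    HasGradientAt (quadratic Q q) (Q x + q) x := by
  rw [hasGradientAt_iff_hasFDerivAt]
  refine ((((hasFDerivAt_id x).inner ℝ Q.hasFDerivAt).const_mul (1 / 2 : ℝ)).add
    (innerSL ℝ q).hasFDerivAt).congr_fderiv (ContinuousLinearMap.ext fun e => ?_)
  simp only [one_div, id_eq, add_apply, smul_apply, ContinuousLinearMap.comp_apply,
    ContinuousLinearMap.prod_apply, ContinuousLinearMap.id_apply, fderivInnerCLM_apply,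
    inner_map_comm hQ e x, smul_eq_mul, coe_innerSL_apply, map_add,
    InnerProductSpace.toDual_apply_apply, hQ x e, add_left_inj]
  ring

theorem quadratic_add_norm_sq_sub_eq {μ : ℝ} (hμ : μ ≠ 0) (q x z : E) :
    quadratic Q q x + ‖z - (x - μ • (Q x + q))‖ ^ 2 / (2 * μ) - μ / 2 * ‖Q x + q‖ ^ 2
      = quadratic Q q z + (‖x - z‖ ^ 2 / μ - ⟪x - z, Q (x - z)⟫) / 2 := by
  obtain ⟨e, rfl⟩ : ∃ e, z = x + e := ⟨z - x, by abel⟩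
  rw [quadratic_add hQ, show x + e - (x - μ • (Q x + q)) = e + μ • (Q x + q) by abel,
    sub_add_cancel_left, norm_add_sq_real, real_inner_smul_right, norm_smul, Real.norm_eq_abs,
    mul_pow, sq_abs, norm_neg, map_neg, inner_neg_left, inner_neg_right, neg_neg,
    real_inner_comm e]
  field_simp
  ring

theorem inner_sub_sub_map_eq {μ : ℝ} (hμ : μ ≠ 0) (a a' w : E) :
    ⟪μ⁻¹ • a - Q a, w - (a - a')⟫ - ⟪w - (a - a'), Q (w - (a - a'))⟫ / 2
      + (‖a‖ ^ 2 / μ - ⟪a, Q a⟫) / 2 - (‖a'‖ ^ 2 / μ - ⟪a', Q a'⟫) / 2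
      = ⟪μ⁻¹ • a, w - μ • Q w⟫ - (⟪w, Q w⟫ - μ * ‖Q w‖ ^ 2) / 2
        - ‖a - a' - μ • Q w‖ ^ 2 / (2 * μ) := by
  obtain ⟨u, rfl⟩ : ∃ u, a' = a - u := ⟨a - a', by abel⟩
  simp only [sub_sub_cancel, map_sub, inner_sub_left, inner_sub_right, real_inner_smul_left,
    real_inner_smul_right, norm_sub_sq_real, norm_smul, Real.norm_eq_abs, mul_pow, sq_abs, hQ]
  rw [inner_map_comm hQ u w, inner_map_comm hQ u a, real_inner_comm u a]
  field_simp
  ring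

theorem quadratic_add_sub_le_of_isMinOn {g : E → ℝ} (hg : ConvexOn ℝ univ g) {μ : ℝ}
    (hμ : 0 < μ) {q x z : E}
    (hz : IsMinOn (fun y => g y + ‖y - (x - μ • (Q x + q))‖ ^ 2 / (2 * μ)) univ z) (x' z' : E) :
    quadratic Q q z + g z + (‖x - z‖ ^ 2 / μ - ⟪x - z, Q (x - z)⟫) / 2
      - (quadratic Q q z' + g z' + (‖x' - z'‖ ^ 2 / μ - ⟪x' - z', Q (x' - z')⟫) / 2)
      ≤ ⟪μ⁻¹ • (x - z), x - x' - μ • Q (x - x')⟫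
        - (⟪x - x', Q (x - x')⟫ - μ * ‖Q (x - x')‖ ^ 2) / 2 := by
  have hφ : quadratic Q q z + g z - (quadratic Q q z' + g z')
      ≤ ⟪μ⁻¹ • (x - z) - Q (x - z), z - z'⟫ - ⟪z - z', Q (z - z')⟫ / 2 := by
    have hprox := hg.inner_sub_div_le_of_isMinOn hμ hz z'
    obtain ⟨d, rfl⟩ : ∃ d, z' = z + d := ⟨z' - z, by abel⟩
    rw [quadratic_add hQ]
    rw [add_sub_cancel_left] at hprox
    simp only [sub_add_cancel_left, map_neg, inner_neg_left, inner_neg_right, neg_neg, map_sub,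
      inner_sub_left, real_inner_smul_left, inner_add_left] at hprox ⊢
    field_simp at hprox ⊢
    linarith
  have hsquare := inner_sub_sub_map_eq hQ hμ.ne' (x - z) (x' - z') (x - x')
  rw [show x - x' - (x - z - (x' - z')) = z - z' by abel] at hsquare
  have : 0 ≤ ‖x - z - (x' - z') - μ • Q (x - x')‖ ^ 2 / (2 * μ) := by positivity
  linarith

theorem mul_inner_sub_smul_map_le {m L μ : ℝ} (hμ : 0 < μ) (hμL : μ * L ≤ 1) (hμm : μ * m < 1)
    (hQm : ∀ x, m * ‖x‖ ^ 2 ≤ ⟪x, Q x⟫) (hQL : ∀ x, ⟪x, Q x⟫ ≤ L * ‖x‖ ^ 2) (w : E) :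
    m * ⟪w, w - μ • Q w⟫ ≤ ⟪w, Q w⟫ - μ * ‖Q w‖ ^ 2 := by
  -- `(Q - m)(1 - μ Q) = μ ((μ⁻¹ - m) S - S²)` for `S = Q - m`
  set S := Q - m • ContinuousLinearMap.id ℝ E
  have hS : ∀ x, S x = Q x - m • x := fun x => rfl
  have hSform : ∀ x, ⟪x, S x⟫ = ⟪x, Q x⟫ - m * ‖x‖ ^ 2 := fun x => by
    rw [hS, inner_sub_right, real_inner_smul_right, real_inner_self_eq_norm_sq]
  have key := norm_map_sq_le_mul_inner_map_self (T := S) (c := 1 / μ - m)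
    (fun x y => by simp only [hS, inner_sub_left, inner_sub_right, real_inner_smul_left,
      real_inner_smul_right, hQ x y])
    (by rw [sub_pos, lt_div_iff₀ hμ]; linarith)
    (fun x => by rw [hSform]; linarith [hQm x])
    (fun x => by
      rw [hSform]
      have : L ≤ 1 / μ := by rw [le_div_iff₀ hμ]; linarith
      linarith [hQL x, mul_le_mul_of_nonneg_right this (sq_nonneg ‖x‖)]) w
  rw [hSform, hS, norm_sub_sq_real, real_inner_smul_right, norm_smul, Real.norm_eq_abs, mul_pow,
    sq_abs, real_inner_comm] at key
  rw [inner_sub_right, real_inner_smul_right, real_inner_self_eq_norm_sq]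
  field_simp at key
  linarith

end Symmetric

theorem FB_envelope_weighted_bound_general {n : ℕ}
    (Q : EuclideanSpace ℝ (Fin n) →L[ℝ] EuclideanSpace ℝ (Fin n))
    (q : EuclideanSpace ℝ (Fin n)) (g : EuclideanSpace ℝ (Fin n) → ℝ)
    (m L μ mt : ℝ)
    (hQsym : ∀ x y : EuclideanSpace ℝ (Fin n), ⟪Q x, y⟫ = ⟪x, Q y⟫)
    (hQm : ∀ x : EuclideanSpace ℝ (Fin n), m * ‖x‖ ^ 2 ≤ ⟪x, Q x⟫)
    (hQL : ∀ x : EuclideanSpace ℝ (Fin n), ⟪x, Q x⟫ ≤ L * ‖x‖ ^ 2)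
    (f : EuclideanSpace ℝ (Fin n) → ℝ)
    (hf : ∀ x, f x = (1 / 2) * ⟪x, Q x⟫ + ⟪q, x⟫)
    (hgconv : ConvexOn ℝ univ g)
    (hμ : μ ∈ Ioo 0 (1 / L))
    (hmt : mt = min ((1 - μ * m) * m) ((1 - μ * L) * L))
    (proxg : EuclideanSpace ℝ (Fin n) → EuclideanSpace ℝ (Fin n))
    (hproxg : ∀ v, IsMinOn (fun z => g z + ‖z - v‖ ^ 2 / (2 * μ)) univ (proxg v))
    (G : EuclideanSpace ℝ (Fin n) → EuclideanSpace ℝ (Fin n))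
    (hG : ∀ x, G x = μ⁻¹ • (x - proxg (x - μ • gradient f x)))
    (M : EuclideanSpace ℝ (Fin n) → ℝ)
    (hM : ∀ v, M v = ⨅ z : EuclideanSpace ℝ (Fin n), (g z + ‖z - v‖ ^ 2 / (2 * μ)))
    (Fμ : EuclideanSpace ℝ (Fin n) → ℝ)
    (hFμ : ∀ x, Fμ x = f x + M (x - μ • gradient f x) - μ / 2 * ‖gradient f x‖ ^ 2)
    (H : EuclideanSpace ℝ (Fin n) → EuclideanSpace ℝ (Fin n))
    (hH : ∀ x, H x = x - μ • Q x) :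
    ∀ x x' : EuclideanSpace ℝ (Fin n),
      Fμ x - Fμ x' ≤ ⟪G x, H (x - x')⟫ - mt / 2 * ⟪x - x', H (x - x')⟫ := by
  obtain rfl : f = quadratic Q q := funext hf
  obtain ⟨hμ0, hμL⟩ := hμ
  rw [lt_div_iff₀ (one_div_pos.1 (hμ0.trans hμL))] at hμL
  have hgrad : ∀ y, gradient (quadratic Q q) y = Q y + q := fun y =>
    (hasGradientAt_quadratic hQsym q y).gradient
  set P := fun y => proxg (y - μ • (Q y + q))
  have hF : ∀ y, Fμ y
      = quadratic Q q (P y) + g (P y) + (‖y - P y‖ ^ 2 / μ - ⟪y - P y, Q (y - P y)⟫) / 2 := by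
    intro y
    rw [hFμ, hM, hgrad, (hproxg _).iInf_univ_eq]
    linarith [quadratic_add_norm_sq_sub_eq hQsym hμ0.ne' q y (P y)]
  have hmt_m : mt ≤ m :=
    hmt ▸ (min_le_left _ _).trans (by linarith [mul_nonneg hμ0.le (sq_nonneg m)])
  have hμmt : μ * mt < 1 := by
    have := mul_le_mul_of_nonneg_left (hmt ▸ min_le_right _ _ : mt ≤ (1 - μ * L) * L) hμ0.le
    nlinarith [sq_nonneg (2 * μ * L - 1)]
  intro x x'
  rw [hF, hF, hG, hgrad, hH]
  refine (quadratic_add_sub_le_of_isMinOn hQsym hgconv hμ0 (hproxg _) x' _).trans ?_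
  have := mul_inner_sub_smul_map_le hQsym hμ0 hμL.le hμmt
    (fun y => (mul_le_mul_of_nonneg_right hmt_m (sq_nonneg _)).trans (hQm y)) hQL (x - x')
  linarith

/-- inequality (eq.delta_char): strong-convexity-type bound
for the forward–backward envelope in the `H = I - μQ` weighted geometry, for a
convex quadratic `f`. -/
theorem FB_envelope_weighted_bound {n : ℕ}
    (Q : EuclideanSpace ℝ (Fin n) →L[ℝ] EuclideanSpace ℝ (Fin n))
    (q : EuclideanSpace ℝ (Fin n)) (g : EuclideanSpace ℝ (Fin n) → ℝ)
    (m L μ mt : ℝ)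
    (hQsym : ∀ x y : EuclideanSpace ℝ (Fin n), ⟪Q x, y⟫ = ⟪x, Q y⟫)
    (hm : 0 ≤ m) (hL : 0 < L)
    (hQm : ∀ x : EuclideanSpace ℝ (Fin n), m * ‖x‖ ^ 2 ≤ ⟪x, Q x⟫)
    (hQmmin : ∃ x : EuclideanSpace ℝ (Fin n), x ≠ 0 ∧ ⟪x, Q x⟫ = m * ‖x‖ ^ 2)
    (hQL : ∀ x : EuclideanSpace ℝ (Fin n), ⟪x, Q x⟫ ≤ L * ‖x‖ ^ 2)
    (hQLmax : ∃ x : EuclideanSpace ℝ (Fin n), x ≠ 0 ∧ ⟪x, Q x⟫ = L * ‖x‖ ^ 2)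
    (f : EuclideanSpace ℝ (Fin n) → ℝ)
    (hf : ∀ x, f x = (1 / 2) * ⟪x, Q x⟫ + ⟪q, x⟫)
    (hgconv : ConvexOn ℝ univ g) (hglsc : LowerSemicontinuous g)
    (hμ : μ ∈ Ioo 0 (1 / L))
    (hmt : mt = min ((1 - μ * m) * m) ((1 - μ * L) * L))
    (proxg : EuclideanSpace ℝ (Fin n) → EuclideanSpace ℝ (Fin n))
    (hproxg : ∀ v, IsMinOn (fun z => g z + ‖z - v‖ ^ 2 / (2 * μ)) univ (proxg v))
    (G : EuclideanSpace ℝ (Fin n) → EuclideanSpace ℝ (Fin n))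
    (hG : ∀ x, G x = μ⁻¹ • (x - proxg (x - μ • gradient f x)))
    (M : EuclideanSpace ℝ (Fin n) → ℝ)
    (hM : ∀ v, M v = ⨅ z : EuclideanSpace ℝ (Fin n), (g z + ‖z - v‖ ^ 2 / (2 * μ)))
    (Fμ : EuclideanSpace ℝ (Fin n) → ℝ)
    (hFμ : ∀ x, Fμ x = f x + M (x - μ • gradient f x) - μ / 2 * ‖gradient f x‖ ^ 2)
    (H : EuclideanSpace ℝ (Fin n) → EuclideanSpace ℝ (Fin n))
    (hH : ∀ x, H x = x - μ • Q x) :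
    ∀ x x' : EuclideanSpace ℝ (Fin n),
      Fμ x - Fμ x' ≤ ⟪G x, H (x - x')⟫ - mt / 2 * ⟪x - x', H (x - x')⟫ :=
  FB_envelope_weighted_bound_general Q q g m L μ mt hQsym hQm hQL f hf hgconv hμ hmt proxg hproxg G
    hG M hM Fμ hFμ H hH
end
end

section
/- Let f(x) = (1/2)⟨x, Qx⟩ + ⟨q, x⟩ with Q symmetric positive semidefinite with largest eigenvalue L > 0, let g : ℝⁿ → ℝ be convex and lower semicontinuous, and let μ ∈ (0, 1/L). Then the forward–backward envelope F_μ is differentiable at every x ∈ ℝⁿ with gradient ∇F_μ(x) = (I − μQ) G_μ(x). -/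
/-!
For convex `g`, the Moreau envelope `M` is differentiable with `∇M(v) = μ⁻¹ (v - prox v)`:
comparing `M u` with the value of its objective at `prox v` gives the upper quadratic bound,
and the monotonicity of `I - prox` (a consequence of the variational inequality characterising
`prox`) gives the matching lower bound. For quadratic `f` the forward step
`x ↦ x - μ ∇f(x)` is affine with symmetric linear part `I - μQ`, so by the chain rule
`∇F_μ(x) = (Qx + q) + (I - μQ) ∇M(x - μ∇f(x)) - μ Q (Qx + q)`, which is `(I - μQ) G_μ(x)`.
-/

open Set RealInnerProductSpace Filter Topology Asymptotics

section Gradient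

variable {F : Type*} [NormedAddCommGroup F] [InnerProductSpace ℝ F] [CompleteSpace F]
  {φ ψ : F → ℝ} {a b x : F}

theorem hasGradientAt_of_abs_sub_le_sq {C : ℝ}
    (h : ∀ y, |φ y - φ x - ⟪a, y - x⟫| ≤ C * ‖y - x‖ ^ 2) : HasGradientAt φ a x := by
  have hO : (fun y => φ y - φ x - ⟪a, y - x⟫) =O[𝓝 x] fun y => ‖y - x‖ ^ 2 :=
    .of_bound C (.of_forall fun y => by simpa using h y)
  exact hasGradientAt_iff_isLittleO.2 (hO.trans_isLittleO (isLittleO_pow_sub_sub x one_lt_two))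

theorem HasGradientAt.add (hφ : HasGradientAt φ a x) (hψ : HasGradientAt ψ b x) :
    HasGradientAt (fun y => φ y + ψ y) (a + b) x := by
  rw [hasGradientAt_iff_hasFDerivAt, map_add]
  exact hφ.hasFDerivAt.add hψ.hasFDerivAt

theorem HasGradientAt.const_mul (hφ : HasGradientAt φ a x) (c : ℝ) :
    HasGradientAt (fun y => c * φ y) (c • a) x := by
  rw [hasGradientAt_iff_hasFDerivAt, map_smul]
  exact hφ.hasFDerivAt.const_mul c

theorem hasGradientAt_norm_sq (x : F) : HasGradientAt (fun y => ‖y‖ ^ 2) ((2 : ℝ) • x) x := by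
  rw [hasGradientAt_iff_hasFDerivAt]
  refine (hasStrictFDerivAt_norm_sq x).hasFDerivAt.congr_fderiv ?_
  ext v
  simp [two_smul]

variable {A : F →L[ℝ] F}

theorem HasGradientAt.comp_symmetric_add (hA : ∀ u v, ⟪A u, v⟫ = ⟪u, A v⟫)
    (hφ : HasGradientAt φ a (A x + b)) : HasGradientAt (fun y => φ (A y + b)) (A a) x := by
  rw [hasGradientAt_iff_hasFDerivAt] at hφ ⊢
  refine (hφ.comp x (A.hasFDerivAt.add_const b)).congr_fderiv ?_
  ext v
  simp [hA]

theorem hasGradientAt_quadratic_s17 (hA : ∀ u v, ⟪A u, v⟫ = ⟪u, A v⟫) (b x : F) :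
    HasGradientAt (fun y => 1 / 2 * ⟪y, A y⟫ + ⟪b, y⟫) (A x + b) x := by
  refine hasGradientAt_of_abs_sub_le_sq (C := ‖A‖ / 2) fun y => ?_
  have hexpand : 1 / 2 * ⟪y, A y⟫ + ⟪b, y⟫ - (1 / 2 * ⟪x, A x⟫ + ⟪b, x⟫) - ⟪A x + b, y - x⟫
      = 1 / 2 * ⟪y - x, A (y - x)⟫ := by
    simp only [map_sub, inner_add_left, inner_sub_left, inner_sub_right, hA x y,
      real_inner_comm (A x) y, hA x x]
    ring
  have hbound : |⟪y - x, A (y - x)⟫| ≤ ‖A‖ * ‖y - x‖ ^ 2 := by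
    calc |⟪y - x, A (y - x)⟫| ≤ ‖y - x‖ * ‖A (y - x)‖ := abs_real_inner_le_norm _ _
      _ ≤ ‖y - x‖ * (‖A‖ * ‖y - x‖) := by gcongr; exact A.le_opNorm _
      _ = ‖A‖ * ‖y - x‖ ^ 2 := by ring
  rw [hexpand, abs_mul, abs_of_pos (by norm_num : (0 : ℝ) < 1 / 2)]
  linarith

end Gradient

noncomputable def moreauEnvelope {F : Type*} [NormedAddCommGroup F] (g : F → ℝ) (μ : ℝ)
    (v : F) : ℝ :=
  ⨅ z, g z + ‖z - v‖ ^ 2 / (2 * μ)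

section Moreau

variable {F : Type*} [NormedAddCommGroup F] {g : F → ℝ} {μ : ℝ} {p v : F}

theorem moreauEnvelope_eq_of_isMinOn
    (hp : IsMinOn (fun z => g z + ‖z - v‖ ^ 2 / (2 * μ)) univ p) :
    moreauEnvelope g μ v = g p + ‖p - v‖ ^ 2 / (2 * μ) :=
  le_antisymm (ciInf_le ⟨_, forall_mem_range.2 fun z => hp (mem_univ z)⟩ p)
    (le_ciInf fun z => hp (mem_univ z))

variable [InnerProductSpace ℝ F]

theorem moreauEnvelope_sub_le {u : F}
    (hp : IsMinOn (fun z => g z + ‖z - v‖ ^ 2 / (2 * μ)) univ p)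
    (hu : ∃ pu, IsMinOn (fun z => g z + ‖z - u‖ ^ 2 / (2 * μ)) univ pu) :
    moreauEnvelope g μ u - moreauEnvelope g μ v
      ≤ μ⁻¹ * ⟪v - p, u - v⟫ + ‖u - v‖ ^ 2 / (2 * μ) := by
  obtain ⟨pu, hpu⟩ := hu
  have hle : moreauEnvelope g μ u ≤ g p + ‖p - u‖ ^ 2 / (2 * μ) := by
    rw [moreauEnvelope_eq_of_isMinOn hpu]
    exact hpu (mem_univ p)
  have hsplit : ‖p - u‖ ^ 2 / (2 * μ)
      = ‖p - v‖ ^ 2 / (2 * μ) + μ⁻¹ * ⟪v - p, u - v⟫ + ‖u - v‖ ^ 2 / (2 * μ) := by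
    rw [show p - u = -(v - p) - (u - v) by abel, norm_sub_sq_real, inner_neg_left, norm_neg,
      show ‖v - p‖ = ‖p - v‖ from norm_sub_rev v p]
    ring
  rw [moreauEnvelope_eq_of_isMinOn hp]
  linarith

theorem inner_sub_le_of_isMinOn (hg : ConvexOn ℝ univ g) (hμ : 0 < μ)
    (hp : IsMinOn (fun z => g z + ‖z - v‖ ^ 2 / (2 * μ)) univ p) (z : F) :
    ⟪v - p, z - p⟫ ≤ μ * (g z - g p) := by
  -- compare the objective at `p` with its value at `p + t (z - p)`, then let `t → 0⁺`
  have hstep : ∀ t ∈ Ioc (0 : ℝ) 1,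
      0 ≤ μ * (g z - g p) - ⟪v - p, z - p⟫ + t * (‖z - p‖ ^ 2 / 2) := by
    rintro t ⟨ht0, ht1⟩
    have hmin : g p + ‖p - v‖ ^ 2 / (2 * μ)
        ≤ g (p + t • (z - p)) + ‖p + t • (z - p) - v‖ ^ 2 / (2 * μ) :=
      hp (mem_univ _)
    have hconv := hg.2 (mem_univ p) (mem_univ z) (sub_nonneg.2 ht1) ht0.le (sub_add_cancel 1 t)
    rw [show (1 - t) • p + t • z = p + t • (z - p) by module, smul_eq_mul, smul_eq_mul] at hconv
    have hsq : ‖p + t • (z - p) - v‖ ^ 2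
        = ‖p - v‖ ^ 2 - 2 * t * ⟪v - p, z - p⟫ + t ^ 2 * ‖z - p‖ ^ 2 := by
      rw [show p + t • (z - p) - v = (p - v) + t • (z - p) by abel, norm_add_sq_real,
        real_inner_smul_right, norm_smul, mul_pow, Real.norm_eq_abs, sq_abs,
        ← neg_sub v p, inner_neg_left]
      ring
    rw [hsq] at hmin
    have key : 0 ≤ t * (2 * μ * (g z - g p) - 2 * ⟪v - p, z - p⟫ + t * ‖z - p‖ ^ 2) := by
      field_simp at hmin
      linarith [mul_le_mul_of_nonneg_left hconv (by positivity : (0 : ℝ) ≤ 2 * μ)]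
    linarith [nonneg_of_mul_nonneg_right key ht0]
  have hlim : Tendsto (fun t => μ * (g z - g p) - ⟪v - p, z - p⟫ + t * (‖z - p‖ ^ 2 / 2))
      (𝓝[>] 0) (𝓝 (μ * (g z - g p) - ⟪v - p, z - p⟫)) := by
    refine tendsto_nhdsWithin_of_tendsto_nhds (Continuous.tendsto' ?_ 0 _ (by simp))
    fun_prop
  linarith [ge_of_tendsto hlim (eventually_of_mem (Ioc_mem_nhdsGT zero_lt_one) hstep)]

theorem inner_sub_sub_nonneg_of_isMinOn (hg : ConvexOn ℝ univ g) (hμ : 0 < μ) {u pu : F}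
    (hpu : IsMinOn (fun z => g z + ‖z - u‖ ^ 2 / (2 * μ)) univ pu)
    (hp : IsMinOn (fun z => g z + ‖z - v‖ ^ 2 / (2 * μ)) univ p) :
    0 ≤ ⟪(v - p) - (u - pu), v - u⟫ := by
  set d := (v - p) - (u - pu)
  -- firm nonexpansiveness of the proximal map
  have hfirm : 0 ≤ ⟪d, p - pu⟫ := by
    have hv := inner_sub_le_of_isMinOn hg hμ hp pu
    have hu := inner_sub_le_of_isMinOn hg hμ hpu p
    have hd : ⟪d, p - pu⟫ = -(⟪v - p, pu - p⟫ + ⟪u - pu, p - pu⟫) := by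
      simp only [d, inner_sub_left, inner_sub_right]
      ring
    linarith
  rw [show v - u = d + (p - pu) by simp only [d]; abel, inner_add_right,
    real_inner_self_eq_norm_sq]
  positivity

theorem hasGradientAt_moreauEnvelope [CompleteSpace F] (hg : ConvexOn ℝ univ g) (hμ : 0 < μ)
    {prox : F → F} (hprox : ∀ v, IsMinOn (fun z => g z + ‖z - v‖ ^ 2 / (2 * μ)) univ (prox v))
    (v : F) : HasGradientAt (moreauEnvelope g μ) (μ⁻¹ • (v - prox v)) v := by
  refine hasGradientAt_of_abs_sub_le_sq (C := 1 / (2 * μ)) fun u => ?_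
  have hup := moreauEnvelope_sub_le (hprox v) ⟨_, hprox u⟩
  have hlow := moreauEnvelope_sub_le (hprox u) ⟨_, hprox v⟩
  have hmono : 0 ≤ μ⁻¹ * ⟪(u - prox u) - (v - prox v), u - v⟫ :=
    mul_nonneg (inv_nonneg.2 hμ.le) (inner_sub_sub_nonneg_of_isMinOn hg hμ (hprox v) (hprox u))
  rw [← neg_sub u v, inner_neg_right, norm_neg] at hlow
  rw [inner_sub_left, mul_sub] at hmono
  rw [real_inner_smul_left, abs_le, one_div_mul_eq_div]
  constructor <;> linarith

end Moreau

theorem FB_envelope_gradient_quadratic_general {n : ℕ}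
    (Q : EuclideanSpace ℝ (Fin n) →L[ℝ] EuclideanSpace ℝ (Fin n))
    (q : EuclideanSpace ℝ (Fin n)) (g : EuclideanSpace ℝ (Fin n) → ℝ)
    (L μ : ℝ)
    (hQsym : ∀ x y : EuclideanSpace ℝ (Fin n), ⟪Q x, y⟫ = ⟪x, Q y⟫)
    (f : EuclideanSpace ℝ (Fin n) → ℝ)
    (hf : ∀ x, f x = (1 / 2) * ⟪x, Q x⟫ + ⟪q, x⟫)
    (hgconv : ConvexOn ℝ univ g)
    (hμ : μ ∈ Ioo 0 (1 / L))
    (proxg : EuclideanSpace ℝ (Fin n) → EuclideanSpace ℝ (Fin n))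
    (hproxg : ∀ v, IsMinOn (fun z => g z + ‖z - v‖ ^ 2 / (2 * μ)) univ (proxg v))
    (G : EuclideanSpace ℝ (Fin n) → EuclideanSpace ℝ (Fin n))
    (hG : ∀ x, G x = μ⁻¹ • (x - proxg (x - μ • gradient f x)))
    (M : EuclideanSpace ℝ (Fin n) → ℝ)
    (hM : ∀ v, M v = ⨅ z : EuclideanSpace ℝ (Fin n), (g z + ‖z - v‖ ^ 2 / (2 * μ)))
    (Fμ : EuclideanSpace ℝ (Fin n) → ℝ)
    (hFμ : ∀ x, Fμ x = f x + M (x - μ • gradient f x) - μ / 2 * ‖gradient f x‖ ^ 2) :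
    ∀ x : EuclideanSpace ℝ (Fin n), HasGradientAt Fμ (G x - μ • Q (G x)) x := by
  intro x
  have hf_grad : ∀ y, HasGradientAt f (Q y + q) y := fun y => by
    simpa only [← funext hf] using hasGradientAt_quadratic_s17 hQsym q y
  set A := ContinuousLinearMap.id ℝ _ - μ • Q
  have hA : ∀ u v, ⟪A u, v⟫ = ⟪u, A v⟫ := fun u v => by
    simp [A, inner_sub_left, inner_sub_right, real_inner_smul_left, real_inner_smul_right, hQsym]
  have hstep : ∀ y, y - μ • gradient f y = A y + -(μ • q) := fun y => by
    simp only [(hf_grad y).gradient, smul_add, sub_apply, ContinuousLinearMap.id_apply,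
      smul_apply, A]
    module
  have hFμ_eq : Fμ = fun y => (f y + moreauEnvelope g μ (A y + -(μ • q)))
      + -(μ / 2) * ‖Q y + q‖ ^ 2 := funext fun y => by
    rw [hFμ, hM, ← hstep, (hf_grad y).gradient, neg_mul, ← sub_eq_add_neg]
    rfl
  have hderiv := ((hf_grad x).add
    ((hasGradientAt_moreauEnvelope hgconv hμ.1 hproxg (A x + -(μ • q))).comp_symmetric_add hA)).add
    (((hasGradientAt_norm_sq (Q x + q)).comp_symmetric_add hQsym).const_mul (-(μ / 2)))
  rw [hFμ_eq]
  convert hderiv using 1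
  rw [hG, ← hstep, (hf_grad x).gradient]
  simp only [A, sub_apply, ContinuousLinearMap.id_apply,
    smul_apply, map_sub, map_smul, map_add]
  have hμ0 : μ ≠ 0 := hμ.1.ne'
  match_scalars <;> field_simp <;> ring

/-- eq. for `∇F_μ`: for a convex quadratic `f`, the
forward–backward envelope is differentiable with gradient
`∇F_μ(x) = (I - μQ) G_μ(x)`. -/
theorem FB_envelope_gradient_quadratic {n : ℕ}
    (Q : EuclideanSpace ℝ (Fin n) →L[ℝ] EuclideanSpace ℝ (Fin n))
    (q : EuclideanSpace ℝ (Fin n)) (g : EuclideanSpace ℝ (Fin n) → ℝ)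
    (L μ : ℝ)
    (hQsym : ∀ x y : EuclideanSpace ℝ (Fin n), ⟪Q x, y⟫ = ⟪x, Q y⟫)
    (hQpsd : ∀ x : EuclideanSpace ℝ (Fin n), 0 ≤ ⟪x, Q x⟫)
    (hL : 0 < L)
    (hQL : ∀ x : EuclideanSpace ℝ (Fin n), ⟪x, Q x⟫ ≤ L * ‖x‖ ^ 2)
    (hQLmax : ∃ x : EuclideanSpace ℝ (Fin n), x ≠ 0 ∧ ⟪x, Q x⟫ = L * ‖x‖ ^ 2)
    (f : EuclideanSpace ℝ (Fin n) → ℝ)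
    (hf : ∀ x, f x = (1 / 2) * ⟪x, Q x⟫ + ⟪q, x⟫)
    (hgconv : ConvexOn ℝ univ g) (hglsc : LowerSemicontinuous g)
    (hμ : μ ∈ Ioo 0 (1 / L))
    (proxg : EuclideanSpace ℝ (Fin n) → EuclideanSpace ℝ (Fin n))
    (hproxg : ∀ v, IsMinOn (fun z => g z + ‖z - v‖ ^ 2 / (2 * μ)) univ (proxg v))
    (G : EuclideanSpace ℝ (Fin n) → EuclideanSpace ℝ (Fin n))
    (hG : ∀ x, G x = μ⁻¹ • (x - proxg (x - μ • gradient f x)))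
    (M : EuclideanSpace ℝ (Fin n) → ℝ)
    (hM : ∀ v, M v = ⨅ z : EuclideanSpace ℝ (Fin n), (g z + ‖z - v‖ ^ 2 / (2 * μ)))
    (Fμ : EuclideanSpace ℝ (Fin n) → ℝ)
    (hFμ : ∀ x, Fμ x = f x + M (x - μ • gradient f x) - μ / 2 * ‖gradient f x‖ ^ 2) :
    ∀ x : EuclideanSpace ℝ (Fin n), HasGradientAt Fμ (G x - μ • Q (G x)) x :=
  FB_envelope_gradient_quadratic_general Q q g L μ hQsym f hf hgconv hμ proxg hproxg G hG M hM Fμ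
    hFμ
end

section
/- Let 0 < m ≤ L and μ > 0 with μL < 1, and let θ, β, γ be real numbers with 1 − γβ ≥ 0. Suppose (1 − θβ) ≥ (1 − μσ)(1 − γβ) for all σ ∈ [m, L]. Then the function σ ↦ (1 − θβ)²/(1 − μσ) + (1 − γβ)²(1 − μσ) is monotone increasing on [m, L]; in particular, for every σ ∈ [m, L], (1 − θβ)²/(1 − μσ) + (1 − γβ)²(1 − μσ) ≤ (1 − θβ)²/(1 − μL) + (1 − γβ)²(1 − μL). -/
/-! With `v = 1 - μσ > 0`, `a = 1 - θβ` and `b = 1 - γβ ≥ 0`, the quantity is `a² / v + b² v`,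
and for `v ≤ w` its drop from `v` to `w` is `(w - v) (a² - b² v w) / (v w)`. The hypothesis
`b v ≤ a` on the range of `v` gives `b² v w ≤ a²`, so the quantity decreases in `v`, i.e.
increases in `σ`. -/

lemma sq_mul_mul_le_sq_of_mul_le {a b v w : ℝ} (hb : 0 ≤ b) (hv : 0 ≤ v) (hw : 0 ≤ w)
    (hva : b * v ≤ a) (hwa : b * w ≤ a) : b ^ 2 * (v * w) ≤ a ^ 2 :=
  calc b ^ 2 * (v * w) = (b * v) * (b * w) := by ring
    _ ≤ a * a := mul_le_mul hva hwa (mul_nonneg hb hw) ((mul_nonneg hb hv).trans hva)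
    _ = a ^ 2 := (sq a).symm

lemma antitoneOn_sq_div_add_sq_mul {a b : ℝ} (hb : 0 ≤ b) :
    AntitoneOn (fun v => a ^ 2 / v + b ^ 2 * v) {v | 0 < v ∧ b * v ≤ a} := by
  rintro v ⟨hv, hva⟩ w ⟨hw, hwa⟩ hvw
  have hprod : b ^ 2 * (v * w) ≤ a ^ 2 :=
    sq_mul_mul_le_sq_of_mul_le hb hv.le hw.le hva hwa
  have hdiff : a ^ 2 / v + b ^ 2 * v - (a ^ 2 / w + b ^ 2 * w)
      = (w - v) * (a ^ 2 - b ^ 2 * (v * w)) / (v * w) := by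
    field_simp
    ring
  have hnonneg : 0 ≤ (w - v) * (a ^ 2 - b ^ 2 * (v * w)) / (v * w) :=
    div_nonneg (mul_nonneg (sub_nonneg.2 hvw) (sub_nonneg.2 hprod)) (by positivity)
  exact sub_nonneg.1 (hdiff ▸ hnonneg)

theorem lyapunov_scalar_maximization_general (m L μ θ β γ : ℝ)
    (hμ : 0 < μ) (hμL : μ * L < 1)
    (hγβ : 0 ≤ 1 - γ * β)
    (hcond : ∀ σ ∈ Set.Icc m L, (1 - μ * σ) * (1 - γ * β) ≤ 1 - θ * β) :
    MonotoneOn (fun σ => (1 - θ * β) ^ 2 / (1 - μ * σ) +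
        (1 - γ * β) ^ 2 * (1 - μ * σ)) (Set.Icc m L) ∧
    ∀ σ ∈ Set.Icc m L,
      (1 - θ * β) ^ 2 / (1 - μ * σ) + (1 - γ * β) ^ 2 * (1 - μ * σ) ≤
        (1 - θ * β) ^ 2 / (1 - μ * L) + (1 - γ * β) ^ 2 * (1 - μ * L) := by
  have hmaps : Set.MapsTo (fun σ => 1 - μ * σ) (Set.Icc m L)
      {v | 0 < v ∧ (1 - γ * β) * v ≤ 1 - θ * β} := fun σ hσ =>
    ⟨sub_pos.2 ((mul_le_mul_of_nonneg_left hσ.2 hμ.le).trans_lt hμL),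
      (mul_comm _ _).trans_le (hcond σ hσ)⟩
  have hv : Antitone fun σ : ℝ => 1 - μ * σ := fun _ _ hxy =>
    sub_le_sub_left (mul_le_mul_of_nonneg_left hxy hμ.le) 1
  have hmono := (antitoneOn_sq_div_add_sq_mul hγβ).comp (hv.antitoneOn _) hmaps
  exact ⟨hmono, fun σ hσ => hmono hσ ⟨hσ.1.trans hσ.2, le_rfl⟩ hσ.2⟩

/-- the scalar maximization step in the Lyapunov analysis:
under the condition `(1 - θβ) ≥ (1 - μσ)(1 - γβ)` on `[m, L]`, the function
`σ ↦ (1 - θβ)²/(1 - μσ) + (1 - γβ)²(1 - μσ)` is monotone increasing on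
`[m, L]`, so its maximum over `[m, L]` is attained at `σ = L`. -/
theorem lyapunov_scalar_maximization (m L μ θ β γ : ℝ)
    (hm : 0 < m) (hmL : m ≤ L) (hμ : 0 < μ) (hμL : μ * L < 1)
    (hγβ : 0 ≤ 1 - γ * β)
    (hcond : ∀ σ ∈ Set.Icc m L, (1 - μ * σ) * (1 - γ * β) ≤ 1 - θ * β) :
    MonotoneOn (fun σ => (1 - θ * β) ^ 2 / (1 - μ * σ) +
        (1 - γ * β) ^ 2 * (1 - μ * σ)) (Set.Icc m L) ∧
    ∀ σ ∈ Set.Icc m L,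
      (1 - θ * β) ^ 2 / (1 - μ * σ) + (1 - γ * β) ^ 2 * (1 - μ * σ) ≤
        (1 - θ * β) ^ 2 / (1 - μ * L) + (1 - γ * β) ^ 2 * (1 - μ * L) :=
  lyapunov_scalar_maximization_general m L μ θ β γ hμ hμL hγβ hcond
end
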